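/- arXiv:1701.06478 — 2 statements merged into one kernel-verified Lean document; each statement's English description precedes it below -/
import Mathlib

section
/- Let n ≥ 1 and let c and d be two distinct codewords of the Varshamov–Tenengolts code VT(n). Then D₊₁(c) ∩ D₊₁(d) = ∅: no binary string of length n+1 can be obtained both from c by a single insertion and from d by a single insertion. In other words, VT(n) is a single-insertion-error correcting code. -/
/-- The checksum of a binary string `c = (c_1, …, c_n)` is `Σ_{i=1}^n i·c_i`. -/
def checksum (c : List Bool) : ℕ :=
  ∑ i ∈ Finset.range c.length, (i + 1) * (c.getD i false).toNat

/-- The Varshamov–Tenengolts code `VT(n)`. -/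
def VT (n : ℕ) : Set (List Bool) :=
  {c | c.length = n ∧ (n + 1) ∣ checksum c}

/-- `ins1 x`: the set of strings obtainable from `x` by inserting one bit
(of either value) at some position. -/
def ins1 (x : List Bool) : Set (List Bool) :=
  {y | ∃ p ≤ x.length, ∃ b : Bool, y = x.take p ++ b :: x.drop p}

/-!
If `y` arises from `c` by inserting `b` at position `p` and from `d` by inserting `b'` at a later
position `q`, then `c = A ++ M ++ b' :: B` and `d = A ++ b :: M ++ B`: the two codewords differ by
moving one bit across the block `M`. This changes the checksum by
`(|A| + |M| + 1) b' - (|A| + 1) b - (number of ones in M)`, an integer of absolute value at most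
`n`, so the VT congruence forces it to vanish. That is only possible if `b = b'` and `M` consists
of copies of `b`, in which case moving the bit changes nothing and `c = d`.
-/

lemma List.count_true_cons (a : Bool) (l : List Bool) :
    (a :: l).count true = a.toNat + l.count true := by
  cases a <;> simp [add_comm]

lemma List.sum_range_getD_toNat (l : List Bool) :
    ∑ i ∈ Finset.range l.length, (l.getD i false).toNat = l.count true := by
  induction l with
  | nil => simp
  | cons a l ih =>
    rw [List.length_cons, Finset.sum_range_succ', List.count_true_cons]
    simp only [List.getD_cons_succ, List.getD_cons_zero, ih, add_comm]

lemma checksum_cons (a : Bool) (l : List Bool) :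
    checksum (a :: l) = a.toNat + checksum l + l.count true := by
  simp only [checksum, List.length_cons, Finset.sum_range_succ', List.getD_cons_succ,
    List.getD_cons_zero, add_mul, one_mul, Finset.sum_add_distrib, List.sum_range_getD_toNat]
  ring

lemma checksum_append (l₁ l₂ : List Bool) :
    checksum (l₁ ++ l₂) = checksum l₁ + checksum l₂ + l₁.length * l₂.count true := by
  induction l₁ with
  | nil => simp [checksum]
  | cons a l ih =>
    simp only [List.cons_append, checksum_cons, ih, List.count_append, List.length_cons]
    ring

lemma checksum_append_cons_add (A M B : List Bool) (b b' : Bool) :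
    checksum (A ++ M ++ b' :: B) + ((A.length + 1) * b.toNat + M.count true) =
      checksum (A ++ b :: M ++ B) + (A.length + M.length + 1) * b'.toNat := by
  simp only [checksum_append, checksum_cons, List.count_true_cons, List.length_append,
    List.length_cons]
  ring

lemma List.cons_eq_append_singleton_of_weight_eq {k : ℕ} {M : List Bool} {b b' : Bool}
    (h : (k + 1) * b.toNat + M.count true = (k + M.length + 1) * b'.toNat) :
    b :: M = M ++ [b'] := by
  have hcount := M.count_le_length (a := true)
  obtain rfl : b = b' := by
    cases b <;> cases b' <;> simp at h ⊢
    omega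
  have hM : M = List.replicate M.length b := by
    rw [List.eq_replicate_iff]
    refine ⟨rfl, ?_⟩
    cases b
    · simpa using List.count_eq_zero.1 (by simpa using h)
    · intro x hx
      exact (List.count_eq_length.1 (by simp at h; omega) x hx).symm
  rw [hM, ← List.replicate_succ, List.replicate_succ']

lemma append_cons_eq_of_checksum_modEq {A M B : List Bool} {b b' : Bool}
    (h : checksum (A ++ M ++ b' :: B) ≡ checksum (A ++ b :: M ++ B)
      [MOD (A ++ M ++ b' :: B).length + 1]) :
    A ++ M ++ b' :: B = A ++ b :: M ++ B := by
  have hlen : (A ++ M ++ b' :: B).length + 1 = A.length + M.length + B.length + 2 := by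
    simp only [List.length_append, List.length_cons]
    ring
  have hcount := M.count_le_length (a := true)
  have hweight : (A.length + 1) * b.toNat + M.count true =
      (A.length + M.length + 1) * b'.toNat := by
    refine Nat.ModEq.eq_of_lt_of_lt (h.add_left_cancel ?_) ?_ ?_
    · rw [checksum_append_cons_add]
    all_goals
      rw [hlen]
      cases b <;> cases b' <;> simp <;> omega
  calc A ++ M ++ b' :: B = A ++ (M ++ [b']) ++ B := by simp
    _ = A ++ b :: M ++ B := by rw [← List.cons_eq_append_singleton_of_weight_eq hweight]

lemma List.length_take_append_cons_drop {α : Type*} (l : List α) (p : ℕ) (a : α) :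
    (l.take p ++ a :: l.drop p).length = l.length + 1 := by
  simp only [List.length_append, List.length_take, List.length_cons, List.length_drop]
  omega

lemma List.eq_of_take_append_cons_drop_eq {α : Type*} {c d : List α} {p : ℕ} {b b' : α}
    (h : c.take p ++ b :: c.drop p = d.take p ++ b' :: d.drop p) : c = d := by
  have hlen : c.length = d.length := by
    simpa only [List.length_take_append_cons_drop, add_left_inj] using congrArg List.length h
  obtain ⟨htake, hdrop⟩ := List.append_inj h (by simp [hlen])
  rw [← c.take_append_drop p, ← d.take_append_drop p, htake, (List.cons.inj hdrop).2]

lemma List.exists_append_of_take_append_cons_drop_eq {α : Type*} {c d : List α} {p q : ℕ}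
    {b b' : α} (hpq : p < q) (hq : q ≤ d.length)
    (h : c.take p ++ b :: c.drop p = d.take q ++ b' :: d.drop q) :
    ∃ A M B, c = A ++ M ++ b' :: B ∧ d = A ++ b :: M ++ B := by
  have hlen : c.length = d.length := by
    simpa only [List.length_take_append_cons_drop, add_left_inj] using congrArg List.length h
  have hsplit : d.take q = d.take p ++ (d.take q).drop p := by
    conv_lhs => rw [← (d.take q).take_append_drop p]
    rw [List.take_take, min_eq_left hpq.le]
  obtain ⟨x, M, hM⟩ : ∃ x M, (d.take q).drop p = x :: M :=
    List.exists_cons_of_ne_nil (by simp; omega)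
  rw [hsplit, hM, List.append_assoc, List.cons_append] at h
  obtain ⟨htake, hdrop⟩ := List.append_inj h (by simp; omega)
  obtain ⟨rfl, hrest⟩ := List.cons_eq_cons.1 hdrop
  refine ⟨d.take p, M, d.drop q, ?_, ?_⟩
  · rw [← c.take_append_drop p, htake, hrest, List.append_assoc]
  · rw [← hM, ← hsplit, List.take_append_drop]

lemma eq_of_mem_VT_of_take_append_cons_drop_eq {n p q : ℕ} {c d : List Bool} {b b' : Bool}
    (hc : c ∈ VT n) (hd : d ∈ VT n) (hpq : p ≤ q) (hq : q ≤ d.length)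
    (h : c.take p ++ b :: c.drop p = d.take q ++ b' :: d.drop q) : c = d := by
  obtain rfl | hlt := hpq.eq_or_lt
  · exact List.eq_of_take_append_cons_drop_eq h
  obtain ⟨A, M, B, rfl, rfl⟩ := List.exists_append_of_take_append_cons_drop_eq hlt hq h
  apply append_cons_eq_of_checksum_modEq
  rw [hc.1]
  exact (Nat.modEq_zero_iff_dvd.2 hc.2).trans (Nat.modEq_zero_iff_dvd.2 hd.2).symm

theorem vt_single_insertion_correcting_general (n : ℕ)
    (c d : List Bool) (hc : c ∈ VT n) (hd : d ∈ VT n) (hcd : c ≠ d) :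
    ins1 c ∩ ins1 d = ∅ := by
  rw [Set.eq_empty_iff_forall_notMem]
  rintro y ⟨⟨p, hp, b, rfl⟩, q, hq, b', hy⟩
  rcases le_total p q with hpq | hqp
  · exact hcd (eq_of_mem_VT_of_take_append_cons_drop_eq hc hd hpq hq hy)
  · exact hcd (eq_of_mem_VT_of_take_append_cons_drop_eq hd hc hqp hp hy.symm).symm

/-- VT(n) is a single-insertion-error correcting code: the single-insertion
balls of two distinct codewords are disjoint. -/
theorem vt_single_insertion_correcting (n : ℕ) (hn : 1 ≤ n)
    (c d : List Bool) (hc : c ∈ VT n) (hd : d ∈ VT n) (hcd : c ≠ d) :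
    ins1 c ∩ ins1 d = ∅ :=
  vt_single_insertion_correcting_general n c d hc hd hcd
end

section
/- Let c be a codeword of the Varshamov–Tenengolts code VT(n) and let y be a binary string of length n obtained from c by a single deletion followed by a single insertion. Then either y = c, or the checksum of y is not divisible by n+1 (i.e., y ∉ VT(n), so the corruption is detectable). -/
/-- `del1 x`: the set of strings obtainable from `x` by deleting one bit. -/
def del1 (x : List Bool) : Set (List Bool) :=
  {w | ∃ p < x.length, w = x.take p ++ x.drop (p + 1)}

/-!
Both `c` and `y` arise from the same string `w` of length `n - 1` by one insertion. Inserting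
`b` at position `p` raises the checksum by `(p + 1)·b` plus the number of ones after the
insertion point, a quantity between `0` and `n`, and two insertions into `w` raising it by the
same amount give the same string. So if both checksums are divisible by `n + 1`, the two
increases agree and `y = c`.
-/

lemma sum_toNat_getD_eq_count (t : List Bool) :
    ∑ i ∈ Finset.range t.length, (t.getD i false).toNat = t.count true := by
  induction t with
  | nil => simp
  | cons h t ih =>
    rw [List.length_cons, Finset.sum_range_succ']
    simp only [List.getD_cons_succ, List.getD_cons_zero, ih, List.count_cons]
    cases h <;> simp

lemma checksum_cons_s5 (b : Bool) (t : List Bool) :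
    checksum (b :: t) = b.toNat + checksum t + t.count true := by
  unfold checksum
  rw [List.length_cons, Finset.sum_range_succ', ← sum_toNat_getD_eq_count t]
  simp only [List.getD_cons_succ, List.getD_cons_zero, add_mul (_ + 1) 1, one_mul,
    Finset.sum_add_distrib]
  ring

lemma checksum_append_cons (u v : List Bool) (b : Bool) :
    checksum (u ++ b :: v) = checksum (u ++ v) + (u.length + 1) * b.toNat + v.count true := by
  induction u with
  | nil => cases b <;> simp [checksum_cons_s5, Nat.add_comm]
  | cons h u ih =>
    simp only [List.cons_append, checksum_cons_s5, ih, List.count_append, List.count_cons,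
      List.length_cons]
    cases b <;> simp <;> ring

def insertionWeight (w : List Bool) (p : ℕ) (b : Bool) : ℕ :=
  (p + 1) * b.toNat + (w.drop p).count true

section Insertion

variable {w : List Bool} {p q : ℕ} {a b : Bool}

lemma checksum_take_append_cons_drop (hp : p ≤ w.length) :
    checksum (w.take p ++ b :: w.drop p) = checksum w + insertionWeight w p b := by
  rw [checksum_append_cons, List.take_append_drop, List.length_take, min_eq_left hp,
    insertionWeight, add_assoc]

lemma insertionWeight_le (hp : p ≤ w.length) : insertionWeight w p b ≤ w.length + 1 := by
  have := (w.drop p).count_le_length (a := true)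
  rw [List.length_drop] at this
  cases b <;> simp only [insertionWeight, Bool.toNat_true, Bool.toNat_false] <;> omega

/-- Between positions `p ≤ q` the weight changes by the number of ones in the segment `s`
of `w` between them, so equal weights force `a = b` and `s` to be a run of `b`'s: both
insertions then only differ in where inside that run the extra `b` lands. -/
lemma take_append_cons_drop_eq_of_le (hpq : p ≤ q) (hq : q ≤ w.length)
    (h : insertionWeight w p a = insertionWeight w q b) :
    w.take p ++ a :: w.drop p = w.take q ++ b :: w.drop q := by
  set s := (w.drop p).take (q - p)
  have hdrop : w.drop p = s ++ w.drop q := by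
    rw [← List.take_append_drop (q - p) (w.drop p), List.drop_drop, Nat.add_sub_cancel' hpq]
  have htake : w.take q = w.take p ++ s := by
    rw [← Nat.add_sub_cancel' hpq, List.take_add]
  have hslen : s.length = q - p := by
    simp only [s, List.length_take, List.length_drop]; omega
  have hcount := s.count_le_length (a := true)
  rw [insertionWeight, insertionWeight, hdrop, List.count_append] at h
  obtain ⟨rfl, hs⟩ : a = b ∧ s.count b = s.length := by
    have := s.count_false_add_count_true
    cases a <;> cases b <;>
      simp only [Bool.toNat_true, Bool.toNat_false, mul_zero, mul_one, true_and,
        Bool.false_eq_true, false_and] at h ⊢ <;> omega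
  have hrep : s = List.replicate (q - p) a :=
    hslen ▸ List.eq_replicate_of_mem fun x hx => (List.count_eq_length.1 hs x hx).symm
  rw [htake, hdrop, hrep, List.append_assoc, ← List.cons_append, ← List.replicate_succ,
    List.replicate_succ', List.append_assoc, List.singleton_append]

lemma take_append_cons_drop_eq (hp : p ≤ w.length) (hq : q ≤ w.length)
    (h : insertionWeight w p a = insertionWeight w q b) :
    w.take p ++ a :: w.drop p = w.take q ++ b :: w.drop q := by
  rcases le_total p q with hpq | hqp
  · exact take_append_cons_drop_eq_of_le hpq hq h
  · exact (take_append_cons_drop_eq_of_le hqp hp h.symm).symm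

end Insertion

lemma mem_ins1_of_mem_del1 {x w : List Bool} (hw : w ∈ del1 x) : x ∈ ins1 w := by
  obtain ⟨p, hp, rfl⟩ := hw
  have hlen : (x.take p).length = p := List.length_take_of_le hp.le
  refine ⟨p, by simp; omega, x[p], ?_⟩
  rw [List.take_left' hlen, List.drop_left' hlen, ← List.drop_eq_getElem_cons hp,
    List.take_append_drop]

lemma length_of_mem_ins1 {w y : List Bool} (hy : y ∈ ins1 w) : y.length = w.length + 1 := by
  obtain ⟨p, hp, b, rfl⟩ := hy
  simp; omega

lemma eq_of_mem_ins1_of_checksum_modEq {w u v : List Bool} (hu : u ∈ ins1 w) (hv : v ∈ ins1 w)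
    (h : checksum u ≡ checksum v [MOD w.length + 2]) : u = v := by
  obtain ⟨p, hp, a, rfl⟩ := hu
  obtain ⟨q, hq, b, rfl⟩ := hv
  rw [checksum_take_append_cons_drop hp, checksum_take_append_cons_drop hq] at h
  refine take_append_cons_drop_eq hp hq (Nat.ModEq.eq_of_lt_of_lt (h.add_left_cancel' _) ?_ ?_)
  · exact Nat.lt_succ_of_le (insertionWeight_le hp)
  · exact Nat.lt_succ_of_le (insertionWeight_le hq)

theorem vt_detect_del_ins_general (n : ℕ) (c y : List Bool)
    (hc : c ∈ VT n)
    (w : List Bool) (hwc : w ∈ del1 c) (hyw : y ∈ ins1 w) :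
    y = c ∨ ¬ (n + 1) ∣ checksum y := by
  obtain ⟨hclen, hcdvd⟩ := hc
  have hcw := mem_ins1_of_mem_del1 hwc
  have hmod : w.length + 2 = n + 1 := by rw [← hclen, length_of_mem_ins1 hcw]
  refine or_iff_not_imp_right.2 fun hydvd => eq_of_mem_ins1_of_checksum_modEq hyw hcw ?_
  rw [hmod]
  exact (Nat.modEq_zero_iff_dvd.2 (not_not.1 hydvd)).trans (Nat.modEq_zero_iff_dvd.2 hcdvd).symm

/-- If a length-`n` string `y` is obtained from a VT(n) codeword `c` by a single
deletion followed by a single insertion, then either `y = c`, or the checksum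
of `y` is not divisible by `n+1` (so the corruption is detectable). -/
theorem vt_detect_del_ins (n : ℕ) (c y : List Bool)
    (hc : c ∈ VT n) (hy : y.length = n)
    (w : List Bool) (hwc : w ∈ del1 c) (hyw : y ∈ ins1 w) :
    y = c ∨ ¬ (n + 1) ∣ checksum y :=
  vt_detect_del_ins_general n c y hc w hwc hyw
end
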